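/- Fix n and u_0 ∈ L²(Ω). Suppose (ν_t)_{t∈[0,T]} and (ν̃_t)_{t∈[0,T]} are two families of finite signed measures on Ω̄ such that, for every bounded measurable f : Ω̄ → ℝ that is continuous on A_n and on B_n, the maps t ↦ ∫_{Ω̄} f dν_t and t ↦ ∫_{Ω̄} f dν̃_t are differentiable with d/dt ∫ f dν_t = ∫ L_n f dν_t and d/dt ∫ f dν̃_t = ∫ L_n f dν̃_t on [0,T], and ∫ f dν_0 = ∫ f dν̃_0 = ∫_Ω f(x) u_0(x) dx. Then ν_t = ν̃_t for every t ∈ [0,T]. -/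

import Mathlib

open MeasureTheory Set Filter Topology Bornology

/-- Characteristic function of a set, real-valued. -/
noncomputable def chi {α : Type*} (A : Set α) (x : α) : ℝ :=
  @ite _ (x ∈ A) (Classical.propDecidable _) 1 0

/-- The nonlocal operator `L_n` associated with the partition `(A, B)` of `Ω̄`
and the kernels `J, G, R`. -/
noncomputable def Lop {N : ℕ} (Ω A B : Set (Fin N → ℝ))
    (J G R : (Fin N → ℝ) → (Fin N → ℝ) → ℝ) (f : (Fin N → ℝ) → ℝ) (x : Fin N → ℝ) : ℝ :=
  chi A x * (∫ y in Ω, chi A y * J x y * (f y - f x))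
    + chi B x * (∫ y in Ω, chi B y * G x y * (f y - f x))
    + chi A x * (∫ y in Ω, chi B y * R x y * (f y - f x))
    + chi B x * (∫ y in Ω, chi A y * R x y * (f y - f x))

/-- Hypothesis (H) on a kernel: continuity, nonnegativity, positivity on the diagonal,
symmetry, and unit total mass. -/
def KernelH {N : ℕ} (V : (Fin N → ℝ) → (Fin N → ℝ) → ℝ) : Prop :=
  Continuous (fun p : (Fin N → ℝ) × (Fin N → ℝ) => V p.1 p.2) ∧
    (∀ x y, 0 ≤ V x y) ∧ (∀ x, 0 < V x x) ∧ (∀ x y, V x y = V y x) ∧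
    (∀ x, (∫ y, V x y) = 1)

/-- Integral of a real function against a (finite) signed measure, via the Jordan
decomposition. -/
noncomputable def sInt {α : Type*} [MeasurableSpace α] (f : α → ℝ)
    (μ : MeasureTheory.SignedMeasure α) : ℝ :=
  (∫ x, f x ∂μ.toJordanDecomposition.posPart) - ∫ x, f x ∂μ.toJordanDecomposition.negPart


/-! The difference `e_f(t) = ∫ f dν_t - ∫ f dν̃_t` vanishes at `t = 0` and satisfies
`e_f' = e_{L_n f}`. Test functions (bounded, measurable, continuous on `A_n` and on `B_n`) are
stable under `L_n`, which at most quadruples their sup norm. As `ν_t` lives on `Ω̄ = A_n ∪ B_n`,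
integration against `ν_t` is a continuous functional on `C_b(A_n) × C_b(B_n)`, and Banach–Steinhaus
bounds these functionals uniformly in `t ∈ [0, T]`. Hence `|e_{L_n^k f}| ≤ C 4^k ‖f‖`, and
integrating `k` times gives `|e_f(t)| ≤ C ‖f‖ (4t)^k / k! → 0`. Finally, a finite signed measure is
determined by its integrals of bounded continuous functions. -/

open scoped BoundedContinuousFunction

namespace MeasureTheory.SignedMeasure

variable {α : Type*} [MeasurableSpace α]

lemma totalVariation_eq_zero_of_forall_subset (μ : SignedMeasure α) {u : Set α}
    (hu : MeasurableSet u) (h : ∀ s, MeasurableSet s → s ⊆ u → μ s = 0) :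
    μ.totalVariation u = 0 := by
  obtain ⟨i, hi, _, _, hpos, hneg⟩ := μ.toJordanDecomposition_spec
  rw [totalVariation, Measure.add_apply, hpos, hneg, toMeasureOfZeroLE_apply _ _ hi hu,
    toMeasureOfLEZero_apply _ _ hi.compl hu]
  simp [h _ (hi.inter hu) inter_subset_right, h _ (hi.compl.inter hu) inter_subset_right]

lemma sInt_congr_ae {μ : SignedMeasure α} {f g : α → ℝ} (h : f =ᵐ[μ.totalVariation] g) :
    sInt f μ = sInt g μ := by
  rw [totalVariation, Filter.EventuallyEq, ae_add_measure_iff] at h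
  rw [sInt, sInt, integral_congr_ae h.1, integral_congr_ae h.2]

lemma sInt_congr_of_eqOn {μ : SignedMeasure α} {f g : α → ℝ} {s : Set α}
    (hs : μ.totalVariation sᶜ = 0) (h : EqOn f g s) : sInt f μ = sInt g μ :=
  sInt_congr_ae (measure_mono_null (fun _ hx hxs => hx (h hxs)) hs)

lemma sInt_add {μ : SignedMeasure α} {f g : α → ℝ} (hf : Integrable f μ.totalVariation)
    (hg : Integrable g μ.totalVariation) : sInt (f + g) μ = sInt f μ + sInt g μ := by
  simp only [sInt, Pi.add_apply]
  rw [integral_add hf.left_of_add_measure hg.left_of_add_measure,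
    integral_add hf.right_of_add_measure hg.right_of_add_measure]
  ring

lemma sInt_smul (μ : SignedMeasure α) (c : ℝ) (f : α → ℝ) :
    sInt (c • f) μ = c * sInt f μ := by
  simp only [sInt, Pi.smul_apply, smul_eq_mul, integral_const_mul, mul_sub]

lemma abs_sInt_le (μ : SignedMeasure α) {f : α → ℝ} {M : ℝ} (hf : ∀ x, |f x| ≤ M) :
    |sInt f μ| ≤ M * μ.totalVariation.real univ := by
  have hbound (m : Measure α) [IsFiniteMeasure m] : |∫ x, f x ∂m| ≤ M * m.real univ :=
    (Real.norm_eq_abs _).symm.trans_le (norm_integral_le_of_norm_le_const (.of_forall hf))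
  rw [totalVariation, measureReal_add_apply, mul_add]
  exact (abs_sub _ _).trans (add_le_add (hbound _) (hbound _))

theorem ext_of_forall_sInt_eq [TopologicalSpace α] [HasOuterApproxClosed α] [BorelSpace α]
    {μ μ' : SignedMeasure α} (h : ∀ f : α →ᵇ ℝ, sInt f μ = sInt f μ') : μ = μ' := by
  set j := μ.toJordanDecomposition
  set j' := μ'.toJordanDecomposition
  -- `μ = μ⁺ - μ⁻`, so `μ = μ'` amounts to `μ⁺ + μ'⁻ = μ'⁺ + μ⁻`
  have hsum : j.posPart + j'.negPart = j'.posPart + j.negPart :=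
    ext_of_forall_integral_eq_of_IsFiniteMeasure fun f => by
      rw [integral_add_measure (f.integrable _) (f.integrable _),
        integral_add_measure (f.integrable _) (f.integrable _)]
      have hf := h f
      simp only [sInt] at hf
      linarith
  ext s hs
  have hs' : (j.posPart + j'.negPart).real s = (j'.posPart + j.negPart).real s := by rw [hsum]
  rw [measureReal_add_apply, measureReal_add_apply] at hs'
  rw [apply_eq_posPart_real_sub_negPart_real _ hs, apply_eq_posPart_real_sub_negPart_real _ hs]
  linarith

end MeasureTheory.SignedMeasure

open Nat in
theorem abs_le_of_hasDerivWithinAt_succ {T C K : ℝ} {u : ℕ → ℝ → ℝ} (hu0 : ∀ n, u n 0 = 0)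
    (hderiv : ∀ n, ∀ t ∈ Icc 0 T, HasDerivWithinAt (u n) (u (n + 1) t) (Icc 0 T) t)
    (hbound : ∀ n, ∀ t ∈ Icc 0 T, |u n t| ≤ C * K ^ n) (k : ℕ) :
    ∀ n, ∀ t ∈ Icc 0 T, |u n t| ≤ C * K ^ (n + k) * t ^ k / k ! := by
  induction k with
  | zero => simpa using hbound
  | succ k ih =>
    intro n t ht
    have hB : ∀ s, HasDerivAt (fun s => C * K ^ (n + (k + 1)) * s ^ (k + 1) / (k + 1)!)
        (C * K ^ (n + 1 + k) * s ^ k / k !) s := fun s => by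
      refine (((hasDerivAt_pow (k + 1) s).const_mul (C * K ^ (n + (k + 1)))).div_const
        ((k + 1)! : ℝ)).congr_deriv ?_
      rw [factorial_succ, cast_mul, cast_succ, add_tsub_cancel_right]
      field_simp
      ring
    refine image_norm_le_of_norm_deriv_right_le_deriv_boundary
      (fun s hs => (hderiv n s hs).continuousWithinAt)
      (fun s hs => (hderiv n s (Ico_subset_Icc_self hs)).mono_of_mem_nhdsWithin
        (Icc_mem_nhdsGE_of_mem hs))
      (by simp [hu0]) hB (fun s hs => ih (n + 1) s (Ico_subset_Icc_self hs)) ht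

theorem eq_zero_of_hasDerivWithinAt_succ {T C K : ℝ} {u : ℕ → ℝ → ℝ} (hu0 : ∀ n, u n 0 = 0)
    (hderiv : ∀ n, ∀ t ∈ Icc 0 T, HasDerivWithinAt (u n) (u (n + 1) t) (Icc 0 T) t)
    (hbound : ∀ n, ∀ t ∈ Icc 0 T, |u n t| ≤ C * K ^ n) : ∀ t ∈ Icc 0 T, u 0 t = 0 := by
  intro t ht
  have hlim : Tendsto (fun k : ℕ => C * (K * t) ^ k / k.factorial) atTop (𝓝 0) := by
    simpa [mul_div_assoc] using
      (FloorSemiring.tendsto_pow_div_factorial_atTop (K * t)).const_mul C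
  refine abs_nonpos_iff.mp (ge_of_tendsto' hlim fun k => ?_)
  rw [mul_pow, ← mul_assoc]
  simpa using abs_le_of_hasDerivWithinAt_succ hu0 hderiv hbound k 0 t ht

section TestFunction

open SignedMeasure BoundedContinuousFunction

variable {X : Type*}

lemma extend_val_apply_of_mem {β : Type*} [Zero β] {s : Set X} (g : s → β) {x : X} (hx : x ∈ s) :
    Function.extend Subtype.val g 0 x = g ⟨x, hx⟩ :=
  Subtype.val_injective.extend_apply g 0 ⟨x, hx⟩

lemma extend_val_apply_of_notMem {β : Type*} [Zero β] {s : Set X} (g : s → β) {x : X}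
    (hx : x ∉ s) :
    Function.extend Subtype.val g 0 x = 0 :=
  Function.extend_apply' _ _ _ fun ⟨y, hy⟩ => hx (hy ▸ y.2)

variable [TopologicalSpace X] {A B : Set X}

noncomputable def extendPair (A B : Set X) (p : (A →ᵇ ℝ) × (B →ᵇ ℝ)) : X → ℝ :=
  Function.extend Subtype.val p.1 0 + Function.extend Subtype.val p.2 0

lemma extendPair_add (p q : (A →ᵇ ℝ) × (B →ᵇ ℝ)) :
    extendPair A B (p + q) = extendPair A B p + extendPair A B q := by
  have h (s : Set X) (g g' : s → ℝ) : Function.extend Subtype.val (g + g') (0 : X → ℝ) =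
      Function.extend Subtype.val g 0 + Function.extend Subtype.val g' 0 := by
    simpa using Function.extend_add Subtype.val g g' 0 0
  simp only [extendPair, Prod.fst_add, Prod.snd_add, coe_add, h]
  abel

lemma extendPair_smul (c : ℝ) (p : (A →ᵇ ℝ) × (B →ᵇ ℝ)) :
    extendPair A B (c • p) = c • extendPair A B p := by
  have h (s : Set X) (g : s →ᵇ ℝ) : Function.extend Subtype.val ⇑(c • g) (0 : X → ℝ) =
      c • Function.extend Subtype.val g 0 := by
    rw [← Function.extend_smul, smul_zero]; rfl
  simp only [extendPair, Prod.smul_fst, Prod.smul_snd, h, smul_add]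

lemma extendPair_apply_of_mem_left (hAB : Disjoint A B) (p : (A →ᵇ ℝ) × (B →ᵇ ℝ)) {x : X}
    (hx : x ∈ A) : extendPair A B p x = p.1 ⟨x, hx⟩ := by
  rw [extendPair, Pi.add_apply, extend_val_apply_of_mem _ hx,
    extend_val_apply_of_notMem _ (hAB.notMem_of_mem_left hx), add_zero]

lemma extendPair_apply_of_mem_right (hAB : Disjoint A B) (p : (A →ᵇ ℝ) × (B →ᵇ ℝ)) {x : X}
    (hx : x ∈ B) : extendPair A B p x = p.2 ⟨x, hx⟩ := by
  rw [extendPair, Pi.add_apply, extend_val_apply_of_mem _ hx,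
    extend_val_apply_of_notMem _ (hAB.notMem_of_mem_right hx), zero_add]

lemma extendPair_apply_of_notMem (p : (A →ᵇ ℝ) × (B →ᵇ ℝ)) {x : X} (hA : x ∉ A)
    (hB : x ∉ B) : extendPair A B p x = 0 := by
  rw [extendPair, Pi.add_apply, extend_val_apply_of_notMem _ hA,
    extend_val_apply_of_notMem _ hB, add_zero]

variable [MeasurableSpace X]

structure IsTestFunction (A B : Set X) (M : ℝ) (f : X → ℝ) : Prop where
  measurable : Measurable f
  abs_le : ∀ x, |f x| ≤ M
  continuousOn_left : ContinuousOn f A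
  continuousOn_right : ContinuousOn f B

lemma IsTestFunction.integrable {M : ℝ} {f : X → ℝ} (hf : IsTestFunction A B M f)
    (μ : Measure X) [IsFiniteMeasure μ] : Integrable f μ :=
  .of_bound hf.measurable.aestronglyMeasurable M (.of_forall hf.abs_le)

lemma isTestFunction_extendPair [OpensMeasurableSpace X] (hA : MeasurableSet A)
    (hB : MeasurableSet B) (hAB : Disjoint A B) (p : (A →ᵇ ℝ) × (B →ᵇ ℝ)) :
    IsTestFunction A B ‖p‖ (extendPair A B p) where
  measurable :=
    ((MeasurableEmbedding.subtype_coe hA).measurable_extend p.1.continuous.measurable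
      measurable_const).add
    ((MeasurableEmbedding.subtype_coe hB).measurable_extend p.2.continuous.measurable
      measurable_const)
  abs_le x := by
    by_cases hxA : x ∈ A
    · rw [extendPair_apply_of_mem_left hAB p hxA, ← Real.norm_eq_abs]
      exact (p.1.norm_coe_le_norm _).trans (norm_fst_le p)
    by_cases hxB : x ∈ B
    · rw [extendPair_apply_of_mem_right hAB p hxB, ← Real.norm_eq_abs]
      exact (p.2.norm_coe_le_norm _).trans (norm_snd_le p)
    rw [extendPair_apply_of_notMem p hxA hxB, abs_zero]
    exact norm_nonneg p
  continuousOn_left := continuousOn_iff_continuous_domRestrict.2 <| by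
    convert p.1.continuous using 1
    exact funext fun x => extendPair_apply_of_mem_left hAB p x.2
  continuousOn_right := continuousOn_iff_continuous_domRestrict.2 <| by
    convert p.2.continuous using 1
    exact funext fun x => extendPair_apply_of_mem_right hAB p x.2

lemma IsTestFunction.exists_extendPair_eqOn (hAB : Disjoint A B) {M : ℝ} {f : X → ℝ}
    (hf : IsTestFunction A B M f) (hM : 0 ≤ M) :
    ∃ p : (A →ᵇ ℝ) × (B →ᵇ ℝ), ‖p‖ ≤ M ∧ EqOn (extendPair A B p) f (A ∪ B) := by
  have hfA := continuousOn_iff_continuous_domRestrict.1 hf.continuousOn_left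
  have hfB := continuousOn_iff_continuous_domRestrict.1 hf.continuousOn_right
  have hbound (s : Set X) (x : s) : ‖s.domRestrict f x‖ ≤ M :=
    (Real.norm_eq_abs _).trans_le (hf.abs_le x)
  refine ⟨(ofNormedAddCommGroup _ hfA M (hbound A), ofNormedAddCommGroup _ hfB M (hbound B)),
    norm_prod_le_iff.2 ⟨norm_ofNormedAddCommGroup_le hfA hM (hbound A),
      norm_ofNormedAddCommGroup_le hfB hM (hbound B)⟩, ?_⟩
  rintro x (hx | hx)
  · exact extendPair_apply_of_mem_left hAB _ hx
  · exact extendPair_apply_of_mem_right hAB _ hx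

variable [OpensMeasurableSpace X]

noncomputable def sIntExtendPairCLM (hA : MeasurableSet A) (hB : MeasurableSet B)
    (hAB : Disjoint A B) (μ : SignedMeasure X) : (A →ᵇ ℝ) × (B →ᵇ ℝ) →L[ℝ] ℝ :=
  LinearMap.mkContinuous
    { toFun p := sInt (extendPair A B p) μ
      map_add' p q := by
        rw [extendPair_add, sInt_add ((isTestFunction_extendPair hA hB hAB p).integrable _)
          ((isTestFunction_extendPair hA hB hAB q).integrable _)]
      map_smul' c p := by rw [extendPair_smul, sInt_smul]; rfl }
    (μ.totalVariation.real univ) fun p =>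
      (abs_sInt_le μ (isTestFunction_extendPair hA hB hAB p).abs_le).trans_eq (mul_comm _ _)

theorem exists_abs_sInt_le_of_continuousOn (hA : MeasurableSet A) (hB : MeasurableSet B)
    (hAB : Disjoint A B) {T : ℝ} {μ : ℝ → SignedMeasure X}
    (hnull : ∀ t ∈ Icc 0 T, (μ t).totalVariation (A ∪ B)ᶜ = 0)
    (hcont : ∀ f M, IsTestFunction A B M f → ContinuousOn (fun t => sInt f (μ t)) (Icc 0 T)) :
    ∃ C, ∀ t ∈ Icc 0 T, ∀ f M, 0 ≤ M → IsTestFunction A B M f → |sInt f (μ t)| ≤ C * M := by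
  set Φ := fun t => sIntExtendPairCLM hA hB hAB (μ t)
  obtain ⟨C, hC⟩ : ∃ C, ∀ t : Icc 0 T, ‖Φ t‖ ≤ C := by
    refine banach_steinhaus fun p => ?_
    obtain ⟨C, hC⟩ := isCompact_Icc.exists_bound_of_continuousOn
      (hcont _ _ (isTestFunction_extendPair hA hB hAB p))
    exact ⟨C, fun t => hC t t.2⟩
  refine ⟨max C 0, fun t ht f M hM hf => ?_⟩
  obtain ⟨p, hpM, hp⟩ := hf.exists_extendPair_eqOn hAB hM
  calc |sInt f (μ t)| = ‖Φ t p‖ := by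
        rw [Real.norm_eq_abs, sInt_congr_of_eqOn (hnull t ht) hp.symm]; rfl
    _ ≤ ‖Φ t‖ * ‖p‖ := (Φ t).le_opNorm p
    _ ≤ max C 0 * M := mul_le_mul ((hC ⟨t, ht⟩).trans (le_max_left _ _)) hpM (norm_nonneg _)
        (le_max_right _ _)

end TestFunction

section Kernel

variable {N : ℕ} {V : (Fin N → ℝ) → (Fin N → ℝ) → ℝ} {w : (Fin N → ℝ) → ℝ} {M : ℝ}

lemma KernelH.nonneg (hV : KernelH V) (x y : Fin N → ℝ) : 0 ≤ V x y :=
  hV.2.1 x y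

lemma KernelH.integral_eq_one (hV : KernelH V) (x : Fin N → ℝ) : ∫ y, V x y = 1 :=
  hV.2.2.2.2 x

lemma KernelH.continuous_uncurry (hV : KernelH V) : Continuous (Function.uncurry V) :=
  hV.1

lemma KernelH.continuous_left (hV : KernelH V) (y : Fin N → ℝ) : Continuous (V · y) :=
  hV.continuous_uncurry.comp (continuous_id.prodMk continuous_const)

lemma KernelH.continuous_right (hV : KernelH V) (x : Fin N → ℝ) : Continuous (V x) :=
  hV.continuous_uncurry.comp (continuous_const.prodMk continuous_id)

lemma KernelH.integrable (hV : KernelH V) (x : Fin N → ℝ) : Integrable (V x) :=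
  Integrable.of_integral_ne_zero (by rw [hV.integral_eq_one x]; exact one_ne_zero)

lemma KernelH.integrable_mul (hV : KernelH V) (hw : Measurable w) (hwM : ∀ y, |w y| ≤ M)
    (Ω : Set (Fin N → ℝ)) (x : Fin N → ℝ) :
    Integrable (fun y => w y * V x y) (volume.restrict Ω) :=
  (hV.integrable x).restrict.bdd_mul hw.aestronglyMeasurable (.of_forall hwM)

lemma KernelH.abs_setIntegral_mul_le (hV : KernelH V) (hwM : ∀ y, |w y| ≤ M)
    (Ω : Set (Fin N → ℝ)) (x : Fin N → ℝ) :
    |∫ y in Ω, w y * V x y| ≤ M := by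
  have hM : 0 ≤ M := (abs_nonneg _).trans (hwM 0)
  calc |∫ y in Ω, w y * V x y| ≤ ∫ y in Ω, M * V x y := by
        refine (Real.norm_eq_abs _).symm.trans_le <| norm_integral_le_of_norm_le
          ((hV.integrable x).restrict.const_mul M) (.of_forall fun y => ?_)
        rw [Real.norm_eq_abs, abs_mul, abs_of_nonneg (hV.nonneg x y)]
        exact mul_le_mul_of_nonneg_right (hwM y) (hV.nonneg x y)
    _ = M * ∫ y in Ω, V x y := integral_const_mul M (V x)
    _ ≤ M * 1 := by
        refine mul_le_mul_of_nonneg_left ?_ hM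
        rw [← hV.integral_eq_one x]
        exact setIntegral_le_integral (hV.integrable x) (.of_forall (hV.nonneg x))
    _ = M := mul_one M

lemma KernelH.continuous_setIntegral_mul (hV : KernelH V) {Ω : Set (Fin N → ℝ)}
    (hΩm : MeasurableSet Ω) (hΩb : IsBounded Ω) (hw : Measurable w) (hwM : ∀ y, |w y| ≤ M) :
    Continuous fun x => ∫ y in Ω, w y * V x y := by
  refine continuous_iff_continuousAt.2 fun x₀ => ?_
  -- near `x₀`, the integrand is dominated by `M` times a bound of `V` on a compact set
  obtain ⟨C, hC⟩ := ((isCompact_closedBall x₀ 1).prod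
    hΩb.isCompact_closure).exists_bound_of_continuousOn hV.continuous_uncurry.continuousOn
  have : IsFiniteMeasure (volume.restrict Ω) :=
    ⟨by rw [Measure.restrict_apply_univ]; exact hΩb.measure_lt_top⟩
  refine continuousAt_of_dominated (bound := fun _ => M * C)
    (.of_forall fun x => (hw.mul (hV.continuous_right x).measurable).aestronglyMeasurable) ?_
    (integrable_const _) (.of_forall fun y =>
      (continuous_const.mul (hV.continuous_left y)).continuousAt)
  filter_upwards [Metric.closedBall_mem_nhds x₀ one_pos] with x hx
  filter_upwards [ae_restrict_mem hΩm] with y hy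
  rw [Real.norm_eq_abs, abs_mul, abs_of_nonneg (hV.nonneg x y)]
  exact mul_le_mul (hwM y) ((le_abs_self _).trans (hC (x, y) ⟨hx, subset_closure hy⟩))
    (hV.nonneg x y) ((abs_nonneg _).trans (hwM y))

lemma KernelH.isTestFunction_setIntegral (hV : KernelH V) {Ω : Set (Fin N → ℝ)}
    (hΩm : MeasurableSet Ω) (hΩb : IsBounded Ω) (hw : Measurable w) (hw1 : ∀ y, |w y| ≤ 1)
    {A B : Set (Fin N → ℝ)} {f : (Fin N → ℝ) → ℝ} (hf : IsTestFunction A B M f) :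
    IsTestFunction A B (2 * M) fun x => ∫ y in Ω, w y * V x y * (f y - f x) := by
  have hM : 0 ≤ M := (abs_nonneg _).trans (hf.abs_le 0)
  have hwf : ∀ y, |w y * f y| ≤ M := fun y => by
    simpa [abs_mul] using mul_le_mul (hw1 y) (hf.abs_le y) (abs_nonneg _) zero_le_one
  have hwfm : Measurable fun y => w y * f y := hw.mul hf.measurable
  let H x := ∫ y in Ω, w y * f y * V x y
  let k x := ∫ y in Ω, w y * V x y
  have hH : Continuous H := hV.continuous_setIntegral_mul hΩm hΩb hwfm hwf
  have hk : Continuous k := hV.continuous_setIntegral_mul hΩm hΩb hw hw1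
  have heq : (fun x => ∫ y in Ω, w y * V x y * (f y - f x)) = fun x => H x - f x * k x := by
    ext x
    rw [← integral_const_mul, ← integral_sub (hV.integrable_mul hwfm hwf Ω x)
      ((hV.integrable_mul hw hw1 Ω x).const_mul _)]
    congr 1 with y
    ring
  rw [heq]
  refine ⟨hH.measurable.sub (hf.measurable.mul hk.measurable), fun x => ?_,
    hH.continuousOn.sub (hf.continuousOn_left.mul hk.continuousOn),
    hH.continuousOn.sub (hf.continuousOn_right.mul hk.continuousOn)⟩
  calc |H x - f x * k x| ≤ |H x| + |f x| * |k x| := (abs_sub _ _).trans_eq (by rw [abs_mul])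
    _ ≤ M + M * 1 := add_le_add (hV.abs_setIntegral_mul_le hwf Ω x)
        (mul_le_mul (hf.abs_le x) (hV.abs_setIntegral_mul_le hw1 Ω x) (abs_nonneg _) hM)
    _ = 2 * M := by ring

end Kernel

section Lop

variable {X : Type*} {A B : Set X} {x : X}

lemma chi_of_mem (h : x ∈ A) : chi A x = 1 := if_pos h

lemma chi_of_notMem (h : x ∉ A) : chi A x = 0 := if_neg h

lemma abs_chi_le_one (A : Set X) (x : X) : |chi A x| ≤ 1 := by
  by_cases h : x ∈ A <;> simp [chi_of_mem, chi_of_notMem, h]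

lemma measurable_chi [MeasurableSpace X] (hA : MeasurableSet A) : Measurable (chi A) :=
  Measurable.ite hA measurable_const measurable_const

variable {N : ℕ} {Ω A B : Set (Fin N → ℝ)} {J G R : (Fin N → ℝ) → (Fin N → ℝ) → ℝ}
  {f : (Fin N → ℝ) → ℝ} {M : ℝ}

lemma Lop_eqOn_left (hAB : Disjoint A B) :
    EqOn (Lop Ω A B J G R f) (fun x => (∫ y in Ω, chi A y * J x y * (f y - f x)) +
      ∫ y in Ω, chi B y * R x y * (f y - f x)) A := fun x hx => by
  simp only [Lop, chi_of_mem hx, chi_of_notMem (hAB.notMem_of_mem_left hx)]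
  ring

lemma Lop_eqOn_right (hAB : Disjoint A B) :
    EqOn (Lop Ω A B J G R f) (fun x => (∫ y in Ω, chi B y * G x y * (f y - f x)) +
      ∫ y in Ω, chi A y * R x y * (f y - f x)) B := fun x hx => by
  simp only [Lop, chi_of_mem hx, chi_of_notMem (hAB.notMem_of_mem_right hx)]
  ring

lemma Lop_of_notMem {x : Fin N → ℝ} (hA : x ∉ A) (hB : x ∉ B) : Lop Ω A B J G R f x = 0 := by
  simp only [Lop, chi_of_notMem hA, chi_of_notMem hB]
  ring

theorem IsTestFunction.lop (hΩo : IsOpen Ω) (hΩb : IsBounded Ω) (hJ : KernelH J)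
    (hG : KernelH G) (hR : KernelH R) (hAB : Disjoint A B) (hA : MeasurableSet A)
    (hB : MeasurableSet B) (hf : IsTestFunction A B M f) :
    IsTestFunction A B (4 * M) (Lop Ω A B J G R f) := by
  have term {V} (hV : KernelH V) {S} (hS : MeasurableSet S) :=
    hV.isTestFunction_setIntegral hΩo.measurableSet hΩb (measurable_chi hS) (abs_chi_le_one S) hf
  have hJA := term hJ hA
  have hGB := term hG hB
  have hRB := term hR hB
  have hRA := term hR hA
  refine ⟨?_, fun x => ?_, (hJA.continuousOn_left.add hRB.continuousOn_left).congr
    (Lop_eqOn_left hAB), (hGB.continuousOn_right.add hRA.continuousOn_right).congr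
    (Lop_eqOn_right hAB)⟩
  · exact ((((measurable_chi hA).mul hJA.measurable).add ((measurable_chi hB).mul
      hGB.measurable)).add ((measurable_chi hA).mul hRB.measurable)).add
      ((measurable_chi hB).mul hRA.measurable)
  by_cases hxA : x ∈ A
  · rw [Lop_eqOn_left hAB hxA]
    linarith [abs_add_le (∫ y in Ω, chi A y * J x y * (f y - f x))
      (∫ y in Ω, chi B y * R x y * (f y - f x)), hJA.abs_le x, hRB.abs_le x]
  by_cases hxB : x ∈ B
  · rw [Lop_eqOn_right hAB hxB]
    linarith [abs_add_le (∫ y in Ω, chi B y * G x y * (f y - f x))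
      (∫ y in Ω, chi A y * R x y * (f y - f x)), hGB.abs_le x, hRA.abs_le x]
  rw [Lop_of_notMem hxA hxB, abs_zero]
  linarith [abs_nonneg (f 0), hf.abs_le 0]

theorem IsTestFunction.lop_iterate (hΩo : IsOpen Ω) (hΩb : IsBounded Ω) (hJ : KernelH J)
    (hG : KernelH G) (hR : KernelH R) (hAB : Disjoint A B) (hA : MeasurableSet A)
    (hB : MeasurableSet B) (hf : IsTestFunction A B M f) (n : ℕ) :
    IsTestFunction A B (4 ^ n * M) ((Lop Ω A B J G R)^[n] f) := by
  induction n with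
  | zero => simpa using hf
  | succ n ih =>
    rw [Function.iterate_succ_apply', pow_succ', mul_assoc]
    exact ih.lop hΩo hΩb hJ hG hR hAB hA hB

end Lop

theorem stmt13_general {N : ℕ} (Ω : Set (Fin N → ℝ))
    (hΩo : IsOpen Ω) (hΩb : IsBounded Ω)
    (J G R : (Fin N → ℝ) → (Fin N → ℝ) → ℝ)
    (hJ : KernelH J) (hG : KernelH G) (hR : KernelH R)
    (A B : Set (Fin N → ℝ))
    (hpart : closure Ω = A ∪ B) (hdisj : A ∩ B = ∅)
    (hBopen : IsOpen B) (hAmeas : MeasurableSet A)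
    (u0 : (Fin N → ℝ) → ℝ)
    (T : ℝ)
    (ν ν' : ℝ → MeasureTheory.SignedMeasure (Fin N → ℝ))
    (hsupp : ∀ t ∈ Set.Icc (0 : ℝ) T, ∀ s : Set (Fin N → ℝ),
      MeasurableSet s → s ⊆ (closure Ω)ᶜ → ν t s = 0)
    (hsupp' : ∀ t ∈ Set.Icc (0 : ℝ) T, ∀ s : Set (Fin N → ℝ),
      MeasurableSet s → s ⊆ (closure Ω)ᶜ → ν' t s = 0)
    (hν : ∀ f : (Fin N → ℝ) → ℝ, Measurable f → (∃ M, ∀ x, |f x| ≤ M) →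
      ContinuousOn f A → ContinuousOn f B →
      ∀ t ∈ Set.Icc (0 : ℝ) T,
        HasDerivWithinAt (fun s => sInt f (ν s))
          (sInt (Lop Ω A B J G R f) (ν t)) (Set.Icc 0 T) t)
    (hν' : ∀ f : (Fin N → ℝ) → ℝ, Measurable f → (∃ M, ∀ x, |f x| ≤ M) →
      ContinuousOn f A → ContinuousOn f B →
      ∀ t ∈ Set.Icc (0 : ℝ) T,
        HasDerivWithinAt (fun s => sInt f (ν' s))
          (sInt (Lop Ω A B J G R f) (ν' t)) (Set.Icc 0 T) t)
    (hν0 : ∀ f : (Fin N → ℝ) → ℝ, Measurable f → (∃ M, ∀ x, |f x| ≤ M) →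
      ContinuousOn f A → ContinuousOn f B →
      sInt f (ν 0) = ∫ x in Ω, f x * u0 x)
    (hν0' : ∀ f : (Fin N → ℝ) → ℝ, Measurable f → (∃ M, ∀ x, |f x| ≤ M) →
      ContinuousOn f A → ContinuousOn f B →
      sInt f (ν' 0) = ∫ x in Ω, f x * u0 x) :
    ∀ t ∈ Set.Icc (0 : ℝ) T, ν t = ν' t := by
  have hB : MeasurableSet B := hBopen.measurableSet
  have hAB : Disjoint A B := disjoint_iff_inter_eq_empty.2 hdisj
  have hnull {μ : ℝ → SignedMeasure (Fin N → ℝ)}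
      (h : ∀ t ∈ Icc 0 T, ∀ s, MeasurableSet s → s ⊆ (closure Ω)ᶜ → μ t s = 0) :
      ∀ t ∈ Icc 0 T, (μ t).totalVariation (A ∪ B)ᶜ = 0 := fun t ht => by
    rw [← hpart]
    exact (μ t).totalVariation_eq_zero_of_forall_subset measurableSet_closure.compl (h t ht)
  obtain ⟨C, hC⟩ := exists_abs_sInt_le_of_continuousOn hAmeas hB hAB (hnull hsupp)
    fun f M hf t ht => (hν f hf.1 ⟨M, hf.2⟩ hf.3 hf.4 t ht).continuousWithinAt
  obtain ⟨C', hC'⟩ := exists_abs_sInt_le_of_continuousOn hAmeas hB hAB (hnull hsupp')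
    fun f M hf t ht => (hν' f hf.1 ⟨M, hf.2⟩ hf.3 hf.4 t ht).continuousWithinAt
  intro t ht
  refine SignedMeasure.ext_of_forall_sInt_eq fun f => ?_
  have hf : IsTestFunction A B ‖f‖ f :=
    ⟨f.continuous.measurable, f.norm_coe_le_norm, f.continuous.continuousOn,
      f.continuous.continuousOn⟩
  set L := Lop Ω A B J G R
  have hLf n := hf.lop_iterate hΩo hΩb hJ hG hR hAB hAmeas hB n
  refine sub_eq_zero.1 <| eq_zero_of_hasDerivWithinAt_succ
    (u := fun n s => sInt (L^[n] f) (ν s) - sInt (L^[n] f) (ν' s))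
    (C := (C + C') * ‖f‖) (K := 4) (fun n => ?_) (fun n s hs => ?_) (fun n s hs => ?_) t ht
  · have h := hLf n
    rw [hν0 _ h.1 ⟨_, h.2⟩ h.3 h.4, hν0' _ h.1 ⟨_, h.2⟩ h.3 h.4, sub_self]
  · have h := hLf n
    rw [Function.iterate_succ_apply']
    exact (hν _ h.1 ⟨_, h.2⟩ h.3 h.4 s hs).sub (hν' _ h.1 ⟨_, h.2⟩ h.3 h.4 s hs)
  · have hM : 0 ≤ 4 ^ n * ‖f‖ := by positivity
    calc _ ≤ C * (4 ^ n * ‖f‖) + C' * (4 ^ n * ‖f‖) :=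
          (abs_sub _ _).trans (add_le_add (hC s hs _ _ hM (hLf n)) (hC' s hs _ _ hM (hLf n)))
      _ = (C + C') * ‖f‖ * 4 ^ n := by ring

theorem stmt13 {N : ℕ} (Ω : Set (Fin N → ℝ))
    (hΩo : IsOpen Ω) (hΩb : IsBounded Ω) (hΩc : IsConnected Ω)
    (J G R : (Fin N → ℝ) → (Fin N → ℝ) → ℝ)
    (hJ : KernelH J) (hG : KernelH G) (hR : KernelH R)
    (A B : Set (Fin N → ℝ))
    (hpart : closure Ω = A ∪ B) (hdisj : A ∩ B = ∅)
    (hBopen : IsOpen B) (hAmeas : MeasurableSet A)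
    (u0 : (Fin N → ℝ) → ℝ) (hu0 : MemLp u0 2 (volume.restrict Ω))
    (T : ℝ) (hT : 0 < T)
    (ν ν' : ℝ → MeasureTheory.SignedMeasure (Fin N → ℝ))
    (hsupp : ∀ t ∈ Set.Icc (0 : ℝ) T, ∀ s : Set (Fin N → ℝ),
      MeasurableSet s → s ⊆ (closure Ω)ᶜ → ν t s = 0)
    (hsupp' : ∀ t ∈ Set.Icc (0 : ℝ) T, ∀ s : Set (Fin N → ℝ),
      MeasurableSet s → s ⊆ (closure Ω)ᶜ → ν' t s = 0)
    (hν : ∀ f : (Fin N → ℝ) → ℝ, Measurable f → (∃ M, ∀ x, |f x| ≤ M) →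
      ContinuousOn f A → ContinuousOn f B →
      ∀ t ∈ Set.Icc (0 : ℝ) T,
        HasDerivWithinAt (fun s => sInt f (ν s))
          (sInt (Lop Ω A B J G R f) (ν t)) (Set.Icc 0 T) t)
    (hν' : ∀ f : (Fin N → ℝ) → ℝ, Measurable f → (∃ M, ∀ x, |f x| ≤ M) →
      ContinuousOn f A → ContinuousOn f B →
      ∀ t ∈ Set.Icc (0 : ℝ) T,
        HasDerivWithinAt (fun s => sInt f (ν' s))
          (sInt (Lop Ω A B J G R f) (ν' t)) (Set.Icc 0 T) t)
    (hν0 : ∀ f : (Fin N → ℝ) → ℝ, Measurable f → (∃ M, ∀ x, |f x| ≤ M) →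
      ContinuousOn f A → ContinuousOn f B →
      sInt f (ν 0) = ∫ x in Ω, f x * u0 x)
    (hν0' : ∀ f : (Fin N → ℝ) → ℝ, Measurable f → (∃ M, ∀ x, |f x| ≤ M) →
      ContinuousOn f A → ContinuousOn f B →
      sInt f (ν' 0) = ∫ x in Ω, f x * u0 x) :
    ∀ t ∈ Set.Icc (0 : ℝ) T, ν t = ν' t :=
  stmt13_general Ω hΩo hΩb J G R hJ hG hR A B hpart hdisj hBopen hAmeas u0 T ν ν' hsupp hsupp' hν
    hν' hν0 hν0'
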